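/- arXiv:1301.1496 — 2 statements merged into one kernel-verified Lean document; each statement's English description precedes it below -/
import Mathlib

section
/- Under the hypotheses of the preceding domination result (families 𝒵_i ⊆ L^q(Ω; ℝ₊) with E(−ξζ) ≤ r_i(ξ)·E(ζ) for all ξ ∈ L^p(Ω; ℝ), ζ ∈ 𝒵_i, and 𝒵 consisting of Z = (ζ₁,…,ζ_d) with ζ_i ∈ 𝒵_i), suppose there exist u ∈ ℝ₊^d and Z ∈ 𝒵 such that the random variable h_𝐗(u ⊙ Z) is integrable (in particular a.s. finite) and u ⊙ E Z ≠ 0. Then ρ_s(𝐗) ≠ ℝ^d, i.e. the selection risk measure of 𝐗 is not the whole space. -/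
open MeasureTheory Set Filter
open scoped Pointwise ENNReal RealInnerProductSpace

noncomputable section

/-- `ℝ^d` with the Euclidean norm. -/
abbrev Vec (d : ℕ) := EuclideanSpace ℝ (Fin d)

/-- Effros measurability of a set-valued map: `{ω : X(ω) ∩ G ≠ ∅}` is measurable
for every open `G`. -/
def EffrosMeasurable {Ω : Type*} [MeasurableSpace Ω] {d : ℕ} (X : Ω → Set (Vec d)) : Prop :=
  ∀ G : Set (Vec d), IsOpen G → MeasurableSet {ω | (X ω ∩ G).Nonempty}

/-- A set-valued portfolio: an Effros-measurable map with nonempty closed convex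
lower-set values. -/
structure IsPortfolio {Ω : Type*} [MeasurableSpace Ω] {d : ℕ} (X : Ω → Set (Vec d)) : Prop where
  effros : EffrosMeasurable X
  nonempty : ∀ ω, (X ω).Nonempty
  isClosed : ∀ ω, IsClosed (X ω)
  convex : ∀ ω, Convex ℝ (X ω)
  lower : ∀ ω, ∀ x ∈ X ω, ∀ y : Vec d, (∀ i, y i ≤ x i) → y ∈ X ω

/-- A coherent risk measure on `L^p(Ω; ℝ)` with values in `ℝ ∪ {+∞} ⊆ EReal`:
monotone (antitone in the gain), cash invariant, subadditive and positively homogeneous. -/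
structure IsCoherent {Ω : Type*} [MeasurableSpace Ω] (μ : Measure Ω) (p : ℝ≥0∞)
    (r : (Ω → ℝ) → EReal) : Prop where
  ne_bot : ∀ ξ : Ω → ℝ, MemLp ξ p μ → r ξ ≠ ⊥
  mono : ∀ ξ η : Ω → ℝ, MemLp ξ p μ → MemLp η p μ → (∀ᵐ ω ∂μ, ξ ω ≤ η ω) → r η ≤ r ξ
  cash : ∀ ξ : Ω → ℝ, MemLp ξ p μ → ∀ c : ℝ, r (fun ω => ξ ω + c) = r ξ - (c : EReal)
  subadd : ∀ ξ η : Ω → ℝ, MemLp ξ p μ → MemLp η p μ →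
    r (fun ω => ξ ω + η ω) ≤ r ξ + r η
  homog : ∀ ξ : Ω → ℝ, MemLp ξ p μ → ∀ c : ℝ, 0 < c →
    r (fun ω => c * ξ ω) = (c : EReal) * r ξ

/-- The selection risk measure `ρ_{s,0}(𝐗)`: the set of deterministic `x ∈ ℝ^d`
for which `𝐗 + x` has a selection with all individually acceptable components. -/
def rho0 {Ω : Type*} [MeasurableSpace Ω] (μ : Measure Ω) (p : ℝ≥0∞) {d : ℕ}
    (r : Fin d → (Ω → ℝ) → EReal) (X : Ω → Set (Vec d)) : Set (Vec d) :=
  {x | ∃ ξ : Ω → Vec d, MemLp ξ p μ ∧ (∀ᵐ ω ∂μ, ξ ω ∈ X ω) ∧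
        ∀ i, r i (fun ω => ξ ω i + x i) ≤ 0}

/-- The support function `h_M(u) = sup{⟨u,x⟩ : x ∈ M}`, with values in `EReal`. -/
def suppFn {d : ℕ} (M : Set (Vec d)) (u : Vec d) : EReal :=
  ⨆ x ∈ M, ((⟪u, x⟫ : ℝ) : EReal)

/-- The lower-bound risk measure `ρ_𝒵(𝐗)` of (4.2)/(4.3): the intersection over
`Z ∈ 𝒵` and `u ∈ ℝ₊^d` of the half-spaces `{x : ⟨x, u ⊙ EZ⟩ ≥ −E h_𝐗(u ⊙ Z)}`;
a constraint is vacuous when `E h_𝐗(u ⊙ Z) = +∞`, i.e. when `h_𝐗(u ⊙ Z)` fails to be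
a.s. finite with integrable (real-valued) version. -/
def rhoZ {Ω : Type*} [MeasurableSpace Ω] (μ : Measure Ω) {d : ℕ}
    (𝒵 : Set (Ω → Vec d)) (X : Ω → Set (Vec d)) : Set (Vec d) :=
  {x | ∀ Z ∈ 𝒵, ∀ u : Vec d, (∀ i, 0 ≤ u i) →
    (∀ᵐ ω ∂μ, suppFn (X ω) (WithLp.toLp 2 (fun i => u i * Z ω i) : Vec d) ≠ ⊤) →
    Integrable (fun ω => (suppFn (X ω) (WithLp.toLp 2 (fun i => u i * Z ω i) : Vec d)).toReal) μ →
    -∫ ω, (suppFn (X ω) (WithLp.toLp 2 (fun i => u i * Z ω i) : Vec d)).toReal ∂μ ≤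
      ⟪x, (WithLp.toLp 2 (fun i => u i * ∫ ω, Z ω i ∂μ) : Vec d)⟫}

/-! `ρ_{s,0}(𝐗)` lies in the lower bound `ρ_𝒵(𝐗)`: for an acceptable selection `ξ` of `𝐗 + x`,
domination gives `-E(ξ_i ζ_i) ≤ x_i E ζ_i` coordinatewise, and `⟨u ⊙ Z, ξ⟩ ≤ h_𝐗(u ⊙ Z)`
pointwise. As `ρ_𝒵(𝐗)` is closed, it also contains `ρ_s(𝐗)`, and the constraint given by the
integrable `h_𝐗(u ⊙ Z)` cuts it down to a half-space with nonzero normal `u ⊙ EZ`. -/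

lemma ENNReal.holderConjugate_of_one_div_add_one_div {p q : ℝ≥0∞} (hpq : 1 / p + 1 / q = 1) :
    p.HolderConjugate q :=
  ENNReal.holderConjugate_iff.2 (by simpa only [one_div] using hpq)

lemma inner_le_suppFn {d : ℕ} {M : Set (Vec d)} {x : Vec d} (hx : x ∈ M) (v : Vec d) :
    ((⟪v, x⟫ : ℝ) : EReal) ≤ suppFn M v :=
  le_biSup (fun y => ((⟪v, y⟫ : ℝ) : EReal)) hx

lemma inner_le_toReal_suppFn {d : ℕ} {M : Set (Vec d)} {x : Vec d} (hx : x ∈ M) {v : Vec d}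
    (hv : suppFn M v ≠ ⊤) : ⟪v, x⟫ ≤ (suppFn M v).toReal :=
  EReal.coe_le_coe_iff.1 ((inner_le_suppFn hx v).trans (EReal.le_coe_toReal hv))

lemma inner_toLp_mul {d : ℕ} (u z y : Vec d) :
    ⟪(WithLp.toLp 2 (fun i => u i * z i) : Vec d), y⟫ = ∑ i, u i * (y i * z i) := by
  simp only [PiLp.inner_apply, RCLike.inner_apply, conj_trivial]
  exact Finset.sum_congr rfl fun i _ => by ring

lemma isClosed_setOf_le_inner {d : ℕ} (a : ℝ) (w : Vec d) : IsClosed {x : Vec d | a ≤ ⟪x, w⟫} :=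
  isClosed_le continuous_const (continuous_id.inner continuous_const)

lemma setOf_le_inner_ne_univ {d : ℕ} (a : ℝ) {w : Vec d} (hw : w ≠ 0) :
    {x : Vec d | a ≤ ⟪x, w⟫} ≠ univ := by
  have hw2 : ‖w‖ ^ 2 ≠ 0 := pow_ne_zero 2 (norm_ne_zero_iff.2 hw)
  refine fun h => (lt_irrefl a) ?_
  have hx : ((a - 1) / ‖w‖ ^ 2) • w ∈ {x : Vec d | a ≤ ⟪x, w⟫} := h ▸ mem_univ _
  simp only [mem_ofPred_eq, real_inner_smul_left, real_inner_self_eq_norm_sq,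
    div_mul_cancel₀ _ hw2] at hx
  linarith

section LowerBound

variable {Ω : Type*} [MeasurableSpace Ω] {μ : Measure Ω} {d : ℕ}

lemma isClosed_rhoZ (𝒵 : Set (Ω → Vec d)) (X : Ω → Set (Vec d)) : IsClosed (rhoZ μ 𝒵 X) := by
  simp only [rhoZ, ofPred_forall]
  exact isClosed_iInter fun Z => isClosed_iInter fun _ => isClosed_iInter fun u =>
    isClosed_iInter fun _ => isClosed_iInter fun _ => isClosed_iInter fun _ =>
      isClosed_setOf_le_inner _ _

lemma rhoZ_subset_setOf_le_inner {𝒵 : Set (Ω → Vec d)} {X : Ω → Set (Vec d)} {Z : Ω → Vec d}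
    (hZ : Z ∈ 𝒵) {u : Vec d} (hu : ∀ i, 0 ≤ u i)
    (hfin : ∀ᵐ ω ∂μ, suppFn (X ω) (WithLp.toLp 2 (fun i => u i * Z ω i) : Vec d) ≠ ⊤)
    (hint : Integrable
      (fun ω => (suppFn (X ω) (WithLp.toLp 2 (fun i => u i * Z ω i) : Vec d)).toReal) μ) :
    rhoZ μ 𝒵 X ⊆ {x | -∫ ω, (suppFn (X ω) (WithLp.toLp 2 (fun i => u i * Z ω i) : Vec d)).toReal ∂μ
      ≤ ⟪x, (WithLp.toLp 2 (fun i => u i * ∫ ω, Z ω i ∂μ) : Vec d)⟫} :=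
  fun _ hx => hx Z hZ u hu hfin hint

lemma neg_integral_mul_le_of_dominated [IsFiniteMeasure μ] {p q : ℝ≥0∞} [p.HolderConjugate q]
    {ρ : (Ω → ℝ) → EReal} {ξ ζ : Ω → ℝ} {c : ℝ} (hξ : MemLp ξ p μ) (hζ : MemLp ζ q μ)
    (hζ0 : ∀ᵐ ω ∂μ, 0 ≤ ζ ω)
    (hdom : ((∫ ω, -(ξ ω + c) * ζ ω ∂μ : ℝ) : EReal) ≤
      ρ (fun ω => ξ ω + c) * ((∫ ω, ζ ω ∂μ : ℝ) : EReal))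
    (hacc : ρ (fun ω => ξ ω + c) ≤ 0) :
    -∫ ω, ξ ω * ζ ω ∂μ ≤ c * ∫ ω, ζ ω ∂μ := by
  have hnonpos : ∫ ω, -(ξ ω + c) * ζ ω ∂μ ≤ 0 := EReal.coe_nonpos.1 <|
    hdom.trans (mul_nonpos_of_nonpos_of_nonneg hacc (EReal.coe_nonneg.2 (integral_nonneg_of_ae hζ0)))
  have hξζ : Integrable (fun ω => ξ ω * ζ ω) μ := hξ.integrable_mul hζ
  have hζ1 : Integrable ζ μ := hζ.integrable (ENNReal.HolderConjugate.one_le q p)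
  have hsplit : ∫ ω, -(ξ ω + c) * ζ ω ∂μ = -∫ ω, ξ ω * ζ ω ∂μ - c * ∫ ω, ζ ω ∂μ := by
    rw [show (fun ω => -(ξ ω + c) * ζ ω) = fun ω => -(ξ ω * ζ ω + c * ζ ω) by ext; ring,
      integral_neg, integral_add hξζ (hζ1.const_mul c), integral_const_mul]
    ring
  linarith

theorem rho0_subset_rhoZ [IsFiniteMeasure μ] {p q : ℝ≥0∞} [p.HolderConjugate q]
    {r : Fin d → (Ω → ℝ) → EReal} {𝒵i : Fin d → Set (Ω → ℝ)}
    (h𝒵i : ∀ i, ∀ ζ ∈ 𝒵i i, MemLp ζ q μ ∧ (∀ᵐ ω ∂μ, 0 ≤ ζ ω) ∧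
      ∀ ξ : Ω → ℝ, MemLp ξ p μ →
        ((∫ ω, -ξ ω * ζ ω ∂μ : ℝ) : EReal) ≤ r i ξ * ((∫ ω, ζ ω ∂μ : ℝ) : EReal))
    {𝒵 : Set (Ω → Vec d)} (h𝒵 : ∀ Z ∈ 𝒵, ∀ i, (fun ω => Z ω i) ∈ 𝒵i i) (X : Ω → Set (Vec d)) :
    rho0 μ p r X ⊆ rhoZ μ 𝒵 X := by
  rintro x ⟨ξ, hξ, hξX, hacc⟩ Z hZ u hu hfin hint
  have hξi (i : Fin d) : MemLp (fun ω => ξ ω i) p μ :=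
    (EuclideanSpace.proj i : Vec d →L[ℝ] ℝ).comp_memLp' hξ
  have hcoord (i : Fin d) : -∫ ω, ξ ω i * Z ω i ∂μ ≤ x i * ∫ ω, Z ω i ∂μ := by
    obtain ⟨hζ, hζ0, hdom⟩ := h𝒵i i _ (h𝒵 Z hZ i)
    exact neg_integral_mul_le_of_dominated (hξi i) hζ hζ0
      (hdom _ ((hξi i).add (memLp_const _))) (hacc i)
  have hint_i (i : Fin d) : Integrable (fun ω => u i * (ξ ω i * Z ω i)) μ :=
    ((hξi i).integrable_mul (h𝒵i i _ (h𝒵 Z hZ i)).1).const_mul (u i)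
  calc -∫ ω, (suppFn (X ω) (WithLp.toLp 2 (fun i => u i * Z ω i) : Vec d)).toReal ∂μ
      ≤ -∫ ω, ∑ i, u i * (ξ ω i * Z ω i) ∂μ := by
        refine neg_le_neg (integral_mono_ae (integrable_finsetSum _ fun i _ => hint_i i) hint ?_)
        filter_upwards [hξX, hfin] with ω hω hωfin
        simpa only [inner_toLp_mul] using inner_le_toReal_suppFn hω hωfin
    _ = ∑ i, u i * -∫ ω, ξ ω i * Z ω i ∂μ := by
        simp only [integral_finsetSum _ fun i _ => hint_i i, integral_const_mul, mul_neg,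
          Finset.sum_neg_distrib]
    _ ≤ ∑ i, u i * (x i * ∫ ω, Z ω i ∂μ) :=
        Finset.sum_le_sum fun i _ => mul_le_mul_of_nonneg_left (hcoord i) (hu i)
    _ = _ := by
        simp only [PiLp.inner_apply, RCLike.inner_apply, conj_trivial]
        exact Finset.sum_congr rfl fun i _ => by ring

end LowerBound

theorem statement8_general {Ω : Type*} [MeasurableSpace Ω] (μ : Measure Ω) [IsProbabilityMeasure μ]
    {d : ℕ} (p q : ℝ≥0∞) (hpq : 1/p + 1/q = 1)
    (r : Fin d → (Ω → ℝ) → EReal)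
    (𝒵i : Fin d → Set (Ω → ℝ))
    (h𝒵i : ∀ i, ∀ ζ ∈ 𝒵i i, MemLp ζ q μ ∧ (∀ᵐ ω ∂μ, 0 ≤ ζ ω) ∧
      ∀ ξ : Ω → ℝ, MemLp ξ p μ →
        ((∫ ω, -ξ ω * ζ ω ∂μ : ℝ) : EReal) ≤ r i ξ * ((∫ ω, ζ ω ∂μ : ℝ) : EReal))
    (𝒵 : Set (Ω → Vec d))
    (h𝒵 : ∀ Z ∈ 𝒵, MemLp Z q μ ∧ ∀ i, (fun ω => Z ω i) ∈ 𝒵i i)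
    (X : Ω → Set (Vec d))
    (hexists : ∃ u : Vec d, (∀ i, 0 ≤ u i) ∧ ∃ Z ∈ 𝒵,
      (∀ᵐ ω ∂μ, suppFn (X ω) (WithLp.toLp 2 (fun i => u i * Z ω i) : Vec d) ≠ ⊤) ∧
      Integrable (fun ω => (suppFn (X ω) (WithLp.toLp 2 (fun i => u i * Z ω i) : Vec d)).toReal) μ ∧
      (WithLp.toLp 2 (fun i => u i * ∫ ω, Z ω i ∂μ) : Vec d) ≠ 0) :
    closure (rho0 μ p r X) ≠ Set.univ := by
  obtain ⟨u, hu, Z, hZ, hfin, hint, hw⟩ := hexists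
  have := ENNReal.holderConjugate_of_one_div_add_one_div hpq
  have hsub : closure (rho0 μ p r X) ⊆ rhoZ μ 𝒵 X :=
    closure_minimal (rho0_subset_rhoZ h𝒵i (fun Z hZ => (h𝒵 Z hZ).2) X) (isClosed_rhoZ 𝒵 X)
  intro huniv
  exact setOf_le_inner_ne_univ _ hw <|
    univ_subset_iff.1 (huniv ▸ hsub.trans (rhoZ_subset_setOf_le_inner hZ hu hfin hint))

/-- Corollary 4.3: under the domination hypotheses, if `h_𝐗(u ⊙ Z)` is integrable for
some `u ∈ ℝ₊^d` and `Z ∈ 𝒵` with `u ⊙ EZ ≠ 0`, then `ρ_s(𝐗)` is not the whole space. -/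
theorem statement8 {Ω : Type*} [MeasurableSpace Ω] (μ : Measure Ω) [IsProbabilityMeasure μ]
    [μ.IsComplete] {d : ℕ} (p q : ℝ≥0∞) (hp : 1 ≤ p) (hpq : 1/p + 1/q = 1)
    (r : Fin d → (Ω → ℝ) → EReal) (hr : ∀ i, IsCoherent μ p (r i))
    (𝒵i : Fin d → Set (Ω → ℝ))
    (h𝒵i : ∀ i, ∀ ζ ∈ 𝒵i i, MemLp ζ q μ ∧ (∀ᵐ ω ∂μ, 0 ≤ ζ ω) ∧
      ∀ ξ : Ω → ℝ, MemLp ξ p μ →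
        ((∫ ω, -ξ ω * ζ ω ∂μ : ℝ) : EReal) ≤ r i ξ * ((∫ ω, ζ ω ∂μ : ℝ) : EReal))
    (𝒵 : Set (Ω → Vec d)) (h𝒵ne : 𝒵.Nonempty)
    (h𝒵 : ∀ Z ∈ 𝒵, MemLp Z q μ ∧ ∀ i, (fun ω => Z ω i) ∈ 𝒵i i)
    (X : Ω → Set (Vec d)) (hX : IsPortfolio X)
    (hsel : ∃ ξ : Ω → Vec d, MemLp ξ p μ ∧ ∀ᵐ ω ∂μ, ξ ω ∈ X ω)
    (hexists : ∃ u : Vec d, (∀ i, 0 ≤ u i) ∧ ∃ Z ∈ 𝒵,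
      (∀ᵐ ω ∂μ, suppFn (X ω) (WithLp.toLp 2 (fun i => u i * Z ω i) : Vec d) ≠ ⊤) ∧
      Integrable (fun ω => (suppFn (X ω) (WithLp.toLp 2 (fun i => u i * Z ω i) : Vec d)).toReal) μ ∧
      (WithLp.toLp 2 (fun i => u i * ∫ ω, Z ω i ∂μ) : Vec d) ≠ 0) :
    closure (rho0 μ p r X) ≠ Set.univ :=
  statement8_general μ p q hpq r 𝒵i h𝒵i 𝒵 h𝒵 X hexists
end
end

section
/- Let d = 2, p = ∞, and let r be a real-valued coherent risk measure on L^∞(Ω; ℝ) that is comonotonically additive (r(ξ + η) = r(ξ) + r(η) whenever ξ, η are comonotonic), with 𝐫 = (r, r). Let π^{12}, π^{21} > 0 with π^{12}π^{21} > 1, set b₁ = (1, −π^{21}), b₂ = (−π^{12}, 1), K = {λb₁ + δb₂ : λ, δ ≥ 0}, and let K' = {u ∈ ℝ² : ⟨u, x⟩ ≤ 0 for all x ∈ K} be the dual cone. Let X ∈ L^∞(Ω; ℝ²) and set L = ⋂_{u∈K'} {x ∈ ℝ² : r(⟨X, u⟩) ≤ ⟨x, u⟩}. Then there exists b > 0 such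 that every x ∈ L with ‖x‖ ≥ b satisfies x ∈ ρ_s(X + K). -/
open MeasureTheory Set Filter
open scoped Pointwise ENNReal RealInnerProductSpace

noncomputable section

/-- A real-valued coherent risk measure on `L^p(Ω; ℝ)`: monotone (antitone in the gain),
cash invariant, subadditive and positively homogeneous. -/
structure IsCoherentR {Ω : Type*} [MeasurableSpace Ω] (μ : Measure Ω) (p : ℝ≥0∞)
    (r : (Ω → ℝ) → ℝ) : Prop where
  mono : ∀ ξ η : Ω → ℝ, MemLp ξ p μ → MemLp η p μ → (∀ᵐ ω ∂μ, ξ ω ≤ η ω) → r η ≤ r ξ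
  cash : ∀ ξ : Ω → ℝ, MemLp ξ p μ → ∀ c : ℝ, r (fun ω => ξ ω + c) = r ξ - c
  subadd : ∀ ξ η : Ω → ℝ, MemLp ξ p μ → MemLp η p μ →
    r (fun ω => ξ ω + η ω) ≤ r ξ + r η
  homog : ∀ ξ : Ω → ℝ, MemLp ξ p μ → ∀ c : ℝ, 0 < c →
    r (fun ω => c * ξ ω) = c * r ξ

/-- The selection risk measure `ρ_{s,0}(𝐗)` (real-valued marginal risk measures). -/
def rho0R {Ω : Type*} [MeasurableSpace Ω] (μ : Measure Ω) (p : ℝ≥0∞) {d : ℕ}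
    (r : Fin d → (Ω → ℝ) → ℝ) (X : Ω → Set (Vec d)) : Set (Vec d) :=
  {x | ∃ ξ : Ω → Vec d, MemLp ξ p μ ∧ (∀ᵐ ω ∂μ, ξ ω ∈ X ω) ∧
        ∀ i, r i (fun ω => ξ ω i + x i) ≤ 0}

/-- Two random variables are comonotonic if
`(ξ(ω) − ξ(ω'))(η(ω) − η(ω')) ≥ 0` for `P ⊗ P`-a.e. `(ω, ω')`. -/
def Comonotonic {Ω : Type*} [MeasurableSpace Ω] (μ : Measure Ω) (ξ η : Ω → ℝ) : Prop :=
  ∀ᵐ w ∂(μ.prod μ), 0 ≤ (ξ w.1 - ξ w.2) * (η w.1 - η w.2)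

/-
Testing `L` against the two extreme rays `(π²¹, 1)` and `(1, π¹²)` of `K'` gives
`r(π²¹X₁ + X₂) ≤ π²¹x₁ + x₂` and `r(X₁ + π¹²X₂) ≤ x₁ + π¹²x₂`. If `x₁ ≤ -‖X‖_∞`, the random
selection `(-X₁ - x₁) b₁` of `K` cancels the first coordinate of `X + x`, and cash invariance
turns the first inequality into the acceptability of the second coordinate; symmetrically if
`x₂ ≤ -‖X‖_∞`. Otherwise both coordinates are bounded below, so a point of large norm has a
large coordinate, say `x₁`, and the deterministic selection `δ b₂` with
`δ = max(0, r(X₂) - x₂) ≤ |r(X₂)| + ‖X‖_∞` works. So `x` even lies in `ρ_{s,0}(X + K)`.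
-/

namespace IsCoherentR

variable {Ω : Type*} [MeasurableSpace Ω] {μ : Measure Ω} {p : ℝ≥0∞} {r : (Ω → ℝ) → ℝ}

theorem map_zero (hr : IsCoherentR μ p r) : r (fun _ => 0) = 0 := by
  have h := hr.homog (fun _ => 0) MemLp.zero 2 two_pos
  simp only [mul_zero] at h
  linarith

theorem nonpos_of_eq_add_const (hr : IsCoherentR μ p r) {f ξ : Ω → ℝ} {c : ℝ}
    (hξ : MemLp ξ p μ) (hc : r ξ ≤ c) (hf : f = fun ω => ξ ω + c) : r f ≤ 0 := by
  rw [hf, hr.cash ξ hξ c]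
  linarith

end IsCoherentR

theorem inner_single_add_single_right {d : ℕ} (i j : Fin d) (π : ℝ) (v : Vec d) :
    ⟪v, EuclideanSpace.single i π + EuclideanSpace.single j 1⟫ = π * v i + v j := by
  simp [inner_add_right, EuclideanSpace.inner_single_right]

theorem inner_nonpos_of_mem_cone {E : Type*} [NormedAddCommGroup E] [InnerProductSpace ℝ E]
    {u b b' : E} (hb : ⟪u, b⟫ ≤ 0) (hb' : ⟪u, b'⟫ ≤ 0) :
    ∀ y ∈ {y | ∃ l δ : ℝ, 0 ≤ l ∧ 0 ≤ δ ∧ y = l • b + δ • b'}, ⟪u, y⟫ ≤ 0 := by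
  rintro _ ⟨l, δ, hl, hδ, rfl⟩
  rw [inner_add_right, real_inner_smul_right, real_inner_smul_right]
  nlinarith

theorem norm_le_abs_add_abs (x : Vec 2) : ‖x‖ ≤ |x 0| + |x 1| := by
  rw [EuclideanSpace.norm_eq, Fin.sum_univ_two, Real.norm_eq_abs, Real.norm_eq_abs,
    Real.sqrt_le_iff]
  refine ⟨by positivity, ?_⟩
  nlinarith [abs_nonneg (x 0), abs_nonneg (x 1)]

theorem le_or_le_of_two_mul_le_norm {x : Vec 2} {a : ℝ} (h0 : -a < x 0) (h1 : -a < x 1)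
    (hx : 2 * a ≤ ‖x‖) : a ≤ x 0 ∨ a ≤ x 1 := by
  by_contra! h
  linarith [norm_le_abs_add_abs x, abs_lt.mpr ⟨h0, h.1⟩, abs_lt.mpr ⟨h1, h.2⟩]

section Selection

variable {Ω : Type*} [MeasurableSpace Ω] {μ : Measure Ω} {r : (Ω → ℝ) → ℝ}

/-- `ρ_{s,0}(X + K)` for `𝐫 = (r, …, r)`, parametrized by the selection `η` of `K` rather than
by the selection `X + η` of `X + K`. -/
def selectionRiskSet (μ : Measure Ω) (r : (Ω → ℝ) → ℝ) {d : ℕ} (K : Set (Vec d))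
    (X : Ω → Vec d) : Set (Vec d) :=
  {x | ∃ η : Ω → Vec d, MemLp η ⊤ μ ∧ (∀ᵐ ω ∂μ, η ω ∈ K) ∧
    ∀ i, r (fun ω => X ω i + η ω i + x i) ≤ 0}

theorem mem_selectionRiskSet_of_const {d : ℕ} (hr : IsCoherentR μ ⊤ r) {X : Ω → Vec d}
    (hX : MemLp X ⊤ μ) {K : Set (Vec d)} {x y : Vec d} (hy : y ∈ K)
    (h : ∀ i, r (fun ω => X ω i) ≤ y i + x i) : x ∈ selectionRiskSet μ r K X :=
  ⟨fun _ => y, memLp_top_const y, ae_of_all _ fun _ => hy, fun i =>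
    hr.nonpos_of_eq_add_const (hX.eval_piLp i) (h i) (by simp only [add_assoc])⟩

variable {K : Set (Vec 2)} {X : Ω → Vec 2} {x b : Vec 2} {i j : Fin 2} {π : ℝ}

theorem mem_selectionRiskSet_of_le_neg (hr : IsCoherentR μ ⊤ r) (hX : MemLp X ⊤ μ)
    (hij : i ≠ j) (hb : b i = 1 ∧ b j = -π) (hbK : ∀ t : ℝ, 0 ≤ t → t • b ∈ K) {M : ℝ}
    (hM : ∀ᵐ ω ∂μ, ‖X ω‖ ≤ M) (hx : x i ≤ -M)
    (hL : r (fun ω => π * X ω i + X ω j) ≤ π * x i + x j) :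
    x ∈ selectionRiskSet μ r K X := by
  have hXi := hX.eval_piLp i
  refine ⟨fun ω => (-X ω i - x i) • b, ?_, ?_, fun k => ?_⟩
  · exact (ContinuousLinearMap.toSpanSingleton ℝ b).comp_memLp'
      (hXi.neg.sub (memLp_top_const (x i)))
  · filter_upwards [hM] with ω hω
    refine hbK _ ?_
    linarith [le_abs_self (X ω i), Real.norm_eq_abs (X ω i) ▸ PiLp.norm_apply_le (X ω) i]
  · rcases (by omega : k = i ∨ k = j) with rfl | rfl
    · refine hr.nonpos_of_eq_add_const (memLp_top_const 0) hr.map_zero.le ?_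
      funext ω
      simp only [PiLp.smul_apply, smul_eq_mul, hb.1]
      ring
    · refine hr.nonpos_of_eq_add_const ((hXi.const_mul π).add (hX.eval_piLp k)) hL ?_
      funext ω
      simp only [PiLp.smul_apply, smul_eq_mul, hb.2, Pi.add_apply]
      ring

theorem mem_selectionRiskSet_of_neg_lt_of_le (hr : IsCoherentR μ ⊤ r) (hX : MemLp X ⊤ μ)
    (hij : i ≠ j) (hπ : 0 ≤ π) (hb : b i = 1 ∧ b j = -π) (hbK : ∀ t : ℝ, 0 ≤ t → t • b ∈ K)
    {M : ℝ} (hM : 0 ≤ M) (hxi : -M < x i)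
    (hxj : |r (fun ω => X ω j)| + π * (|r (fun ω => X ω i)| + M) ≤ x j) :
    x ∈ selectionRiskSet μ r K X := by
  set t := max 0 (r (fun ω => X ω i) - x i)
  have ht : t ≤ |r (fun ω => X ω i)| + M :=
    max_le (by positivity) (by linarith [le_abs_self (r (fun ω => X ω i))])
  refine mem_selectionRiskSet_of_const hr hX (hbK t (le_max_left _ _)) fun k => ?_
  rcases (by omega : k = i ∨ k = j) with rfl | rfl
  · simp only [PiLp.smul_apply, smul_eq_mul, hb.1]
    linarith [le_max_right 0 (r (fun ω => X ω k) - x k)]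
  · simp only [PiLp.smul_apply, smul_eq_mul, hb.2]
    nlinarith [le_abs_self (r (fun ω => X ω k)), mul_le_mul_of_nonneg_left ht hπ]

end Selection

theorem le_of_mem_iInter_dual {Ω : Type*} {r : (Ω → ℝ) → ℝ} {d : ℕ} {K : Set (Vec d)}
    {X : Ω → Vec d} {x : Vec d}
    (hx : x ∈ ⋂ u ∈ {u : Vec d | ∀ y ∈ K, ⟪u, y⟫ ≤ 0},
      {x : Vec d | r (fun ω => ⟪X ω, u⟫) ≤ ⟪x, u⟫})
    {i j : Fin d} {π : ℝ}
    (hu : ∀ y ∈ K, ⟪EuclideanSpace.single i π + EuclideanSpace.single j 1, y⟫ ≤ 0) :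
    r (fun ω => π * X ω i + X ω j) ≤ π * x i + x j := by
  simpa only [mem_ofPred_eq, inner_single_add_single_right] using mem_iInter₂.mp hx _ hu

theorem statement13_general {Ω : Type*} [MeasurableSpace Ω] (μ : Measure Ω)
    (r : (Ω → ℝ) → ℝ) (hr : IsCoherentR μ ⊤ r)
    (π12 π21 : ℝ) (h12 : 0 < π12) (h21 : 0 < π21) (hπ : 1 < π12 * π21)
    (b₁ b₂ : Vec 2) (hb₁ : b₁ 0 = 1 ∧ b₁ 1 = -π21) (hb₂ : b₂ 0 = -π12 ∧ b₂ 1 = 1)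
    (K : Set (Vec 2)) (hK : K = {y | ∃ l δ : ℝ, 0 ≤ l ∧ 0 ≤ δ ∧ y = l • b₁ + δ • b₂})
    (X : Ω → Vec 2) (hX : MemLp X ⊤ μ) :
    ∃ b > (0 : ℝ),
      ∀ x ∈ ⋂ u ∈ {u : Vec 2 | ∀ y ∈ K, ⟪u, y⟫ ≤ 0},
          {x : Vec 2 | r (fun ω => ⟪X ω, u⟫) ≤ ⟪x, u⟫},
        b ≤ ‖x‖ →
          x ∈ closure {x : Vec 2 | ∃ η : Ω → Vec 2, MemLp η ⊤ μ ∧ (∀ᵐ ω ∂μ, η ω ∈ K) ∧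
            ∀ i, r (fun ω => X ω i + η ω i + x i) ≤ 0} := by
  have hb₁K : ∀ t : ℝ, 0 ≤ t → t • b₁ ∈ K := fun t ht => hK ▸ ⟨t, 0, ht, le_rfl, by simp⟩
  have hb₂K : ∀ t : ℝ, 0 ≤ t → t • b₂ ∈ K := fun t ht => hK ▸ ⟨0, t, le_rfl, ht, by simp⟩
  have hu₁ : ∀ y ∈ K, ⟪EuclideanSpace.single 0 π21 + EuclideanSpace.single 1 1, y⟫ ≤ 0 :=
    hK ▸ inner_nonpos_of_mem_cone
      (by rw [real_inner_comm, inner_single_add_single_right, hb₁.1, hb₁.2]; linarith)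
      (by rw [real_inner_comm, inner_single_add_single_right, hb₂.1, hb₂.2]; linarith)
  have hu₂ : ∀ y ∈ K, ⟪EuclideanSpace.single 1 π12 + EuclideanSpace.single 0 1, y⟫ ≤ 0 :=
    hK ▸ inner_nonpos_of_mem_cone
      (by rw [real_inner_comm, inner_single_add_single_right, hb₁.1, hb₁.2]; linarith)
      (by rw [real_inner_comm, inner_single_add_single_right, hb₂.1, hb₂.2]; linarith)
  set M := lpNorm X ∞ μ
  have hM0 : 0 ≤ M := lpNorm_nonneg
  have hM := ae_le_lpNorm_exponent_top hX
  set A₀ := |r (fun ω => X ω 0)| + π12 * (|r (fun ω => X ω 1)| + M)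
  set A₁ := |r (fun ω => X ω 1)| + π21 * (|r (fun ω => X ω 0)| + M)
  have hA₀ : 0 ≤ A₀ := by positivity
  have hA₁ : 0 ≤ A₁ := by positivity
  refine ⟨2 * (M + A₀ + A₁ + 1), by positivity, fun x hx hxb => subset_closure ?_⟩
  by_cases h0 : x 0 ≤ -M
  · exact mem_selectionRiskSet_of_le_neg hr hX zero_ne_one hb₁ hb₁K hM h0
      (le_of_mem_iInter_dual hx hu₁)
  by_cases h1 : x 1 ≤ -M
  · exact mem_selectionRiskSet_of_le_neg hr hX one_ne_zero ⟨hb₂.2, hb₂.1⟩ hb₂K hM h1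
      (le_of_mem_iInter_dual hx hu₂)
  rw [not_le] at h0 h1
  rcases le_or_le_of_two_mul_le_norm (by linarith) (by linarith) hxb with h | h
  · exact mem_selectionRiskSet_of_neg_lt_of_le hr hX one_ne_zero h12.le ⟨hb₂.2, hb₂.1⟩ hb₂K
      hM0 h1 (by linarith)
  · exact mem_selectionRiskSet_of_neg_lt_of_le hr hX zero_ne_one h21.le hb₁ hb₁K
      hM0 h0 (by linarith)

/-- Proposition 5.4: in dimension 2 with `p = ∞`, a comonotonically additive coherent
risk measure `r`, and the cone `K` generated by a bid-ask matrix, every point of the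
lower bound `⋂_{u ∈ K'}{x : r(⟨X,u⟩) ≤ ⟨x,u⟩}` with sufficiently large norm belongs to
`ρ_s(X + K)`. -/
theorem statement13 {Ω : Type*} [MeasurableSpace Ω] (μ : Measure Ω) [IsProbabilityMeasure μ]
    [μ.IsComplete]
    (r : (Ω → ℝ) → ℝ) (hr : IsCoherentR μ ⊤ r)
    (hcom : ∀ ξ η : Ω → ℝ, MemLp ξ ⊤ μ → MemLp η ⊤ μ → Comonotonic μ ξ η →
      r (fun ω => ξ ω + η ω) = r ξ + r η)
    (π12 π21 : ℝ) (h12 : 0 < π12) (h21 : 0 < π21) (hπ : 1 < π12 * π21)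
    (b₁ b₂ : Vec 2) (hb₁ : b₁ 0 = 1 ∧ b₁ 1 = -π21) (hb₂ : b₂ 0 = -π12 ∧ b₂ 1 = 1)
    (K : Set (Vec 2)) (hK : K = {y | ∃ l δ : ℝ, 0 ≤ l ∧ 0 ≤ δ ∧ y = l • b₁ + δ • b₂})
    (X : Ω → Vec 2) (hX : MemLp X ⊤ μ) :
    ∃ b > (0 : ℝ),
      ∀ x ∈ ⋂ u ∈ {u : Vec 2 | ∀ y ∈ K, ⟪u, y⟫ ≤ 0},
          {x : Vec 2 | r (fun ω => ⟪X ω, u⟫) ≤ ⟪x, u⟫},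
        b ≤ ‖x‖ →
          x ∈ closure {x : Vec 2 | ∃ η : Ω → Vec 2, MemLp η ⊤ μ ∧ (∀ᵐ ω ∂μ, η ω ∈ K) ∧
            ∀ i, r (fun ω => X ω i + η ω i + x i) ≤ 0} :=
  statement13_general μ r hr π12 π21 h12 h21 hπ b₁ b₂ hb₁ hb₂ K hK X hX
end
end
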